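/- arXiv:1902.00151 — 7 statements merged into one kernel-verified Lean document; each statement's English description precedes it below -/
import Mathlib

section
/- Let ρ > 0, n ≥ 1, w ∈ ℝⁿ with wᵢ > 0 for all i, and a ∈ ℝⁿ with aᵢ ≥ 0 for all i and a ≠ 0. Assume the ratios aᵢ/wᵢ are nonincreasing in i. For i = 1,…,n define sᵢ = Σ_{j=1}^{i} wⱼaⱼ, Lᵢ = Σ_{j=1}^{i} wⱼ², αᵢ = sᵢ/(1 + 2ρLᵢ), and let ᾱ = max_{1≤i≤n} αᵢ. Then the vector x* ∈ ℝⁿ with coordinates x*ᵢ = max(aᵢ − 2ρᾱwᵢ, 0) is the unique minimizer of f(x) = (1/2)‖x − a‖₂² + ρ(Σ_{i=1}^{n} wᵢxᵢ)² over the nonnegative orthant {x ∈ ℝⁿ : xᵢ ≥ 0 for all i}. -/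
/-!
With `λ = 2ρᾱ`, the point `x*ᵢ = (aᵢ - λwᵢ)⁺` is the projection of `a - λw` onto the orthant, so it
satisfies the KKT conditions of the strongly convex objective as soon as `∑ wᵢ x*ᵢ = ᾱ`. Writing
`wᵢ (aᵢ - λwᵢ)⁺ = wᵢ² (aᵢ/wᵢ - λ)⁺`, that sum is the sum of the positive terms of the antitone
sequence `aᵢ/wᵢ - λ` weighted by `wᵢ²`; those terms form a prefix, and a maximal weighted prefix sum
is `max_i (sᵢ - λLᵢ) = ᾱ`, attained at the index where `αᵢ = ᾱ`.
-/

open Finset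

section PrefixSums

variable {ι : Type*} [LinearOrder ι] [LocallyFiniteOrderBot ι]

noncomputable def prefixRatio (ρ : ℝ) (w a : ι → ℝ) (i : ι) : ℝ :=
  (∑ j ∈ Iic i, w j * a j) / (1 + 2 * ρ * ∑ j ∈ Iic i, (w j) ^ 2)

theorem sum_sq_mul_ratio_sub_eq {ρ : ℝ} (hρ : 0 ≤ ρ) {w a : ι → ℝ} (hw : ∀ i, 0 < w i)
    (t : ℝ) (i : ι) :
    ∑ j ∈ Iic i, w j ^ 2 * (a j / w j - 2 * ρ * t) =
      prefixRatio ρ w a i + 2 * ρ * (∑ j ∈ Iic i, w j ^ 2) * (prefixRatio ρ w a i - t) := by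
  have hD : 0 < 1 + 2 * ρ * ∑ j ∈ Iic i, w j ^ 2 := by positivity
  have hterm : ∀ j, w j ^ 2 * (a j / w j - 2 * ρ * t) = w j * a j - 2 * ρ * t * w j ^ 2 := by
    intro j
    field_simp [(hw j).ne']
  rw [sum_congr rfl fun j _ => hterm j, sum_sub_distrib, ← mul_sum, prefixRatio]
  field_simp
  ring

variable [Fintype ι]

theorem sum_mul_max_zero_eq_of_isMax_prefix_sum {p c : ι → ℝ} (hp : ∀ i, 0 ≤ p i)
    (hc : Antitone c) {k : ι} (hk : ∀ i, ∑ j ∈ Iic i, p j * c j ≤ ∑ j ∈ Iic k, p j * c j)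
    (hk0 : 0 ≤ ∑ j ∈ Iic k, p j * c j) :
    ∑ i, p i * max (c i) 0 = ∑ j ∈ Iic k, p j * c j := by
  refine le_antisymm ?_ ?_
  · have hpos : ∑ i, p i * max (c i) 0 = ∑ i with 0 < c i, p i * c i := by
      rw [sum_filter]
      refine sum_congr rfl fun i _ => ?_
      split_ifs with h
      · rw [max_eq_left h.le]
      · rw [max_eq_right (not_lt.mp h), mul_zero]
    rw [hpos]
    rcases (univ.filter fun i => 0 < c i).eq_empty_or_nonempty with hS | hS
    · rwa [hS, sum_empty]
    · have hprefix : univ.filter (fun i => 0 < c i) = Iic (max' _ hS) := by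
        ext j
        simp only [mem_filter, mem_univ, true_and, mem_Iic]
        refine ⟨fun hj => le_max' _ j (by simpa using hj), fun hj => ?_⟩
        have hm := (mem_filter.mp (max'_mem _ hS)).2
        exact hm.trans_le (hc hj)
      rw [hprefix]
      exact hk _
  · calc ∑ j ∈ Iic k, p j * c j ≤ ∑ j ∈ Iic k, p j * max (c j) 0 :=
          sum_le_sum fun j _ => mul_le_mul_of_nonneg_left (le_max_left _ _) (hp j)
      _ ≤ ∑ i, p i * max (c i) 0 :=
          sum_le_univ_sum_of_nonneg fun i => mul_nonneg (hp i) (le_max_right _ _)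

theorem sum_mul_max_sub_eq_prefixRatio {ρ : ℝ} (hρ : 0 ≤ ρ) {w a : ι → ℝ}
    (hw : ∀ i, 0 < w i) (ha : ∀ i, 0 ≤ a i)
    (hmono : ∀ i j : ι, i ≤ j → a j / w j ≤ a i / w i) {k : ι}
    (hk : ∀ i, prefixRatio ρ w a i ≤ prefixRatio ρ w a k) :
    ∑ i, w i * max (a i - 2 * ρ * prefixRatio ρ w a k * w i) 0 = prefixRatio ρ w a k := by
  set t := prefixRatio ρ w a k
  have hscale : ∀ i,
      w i * max (a i - 2 * ρ * t * w i) 0 = w i ^ 2 * max (a i / w i - 2 * ρ * t) 0 := by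
    intro i
    have hai : a i - 2 * ρ * t * w i = w i * (a i / w i - 2 * ρ * t) := by
      field_simp [(hw i).ne']
    rw [hai, ← mul_zero (w i), ← mul_max_of_nonneg _ _ (hw i).le, mul_zero]
    ring
  have hkt : ∑ j ∈ Iic k, w j ^ 2 * (a j / w j - 2 * ρ * t) = t := by
    rw [sum_sq_mul_ratio_sub_eq hρ hw, sub_self, mul_zero, add_zero]
  rw [sum_congr rfl fun i _ => hscale i]
  refine (sum_mul_max_zero_eq_of_isMax_prefix_sum (fun i => sq_nonneg (w i))
    (fun i j hij => sub_le_sub_right (hmono i j hij) _) (fun i => ?_) ?_).trans hkt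
  · rw [hkt, sum_sq_mul_ratio_sub_eq hρ hw]
    have hL : 0 ≤ 2 * ρ * ∑ j ∈ Iic i, w j ^ 2 := by positivity
    nlinarith [hk i]
  · rw [hkt]
    exact div_nonneg (sum_nonneg fun j _ => mul_nonneg (hw j).le (ha j)) (by positivity)

end PrefixSums

section Objective

variable {ι : Type*} [Fintype ι]

noncomputable def quadObj (ρ : ℝ) (w a x : ι → ℝ) : ℝ :=
  (1 / 2) * ∑ i, (x i - a i) ^ 2 + ρ * (∑ i, w i * x i) ^ 2

theorem quadObj_eq_taylor (ρ : ℝ) (w a x y : ι → ℝ) :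
    quadObj ρ w a x = quadObj ρ w a y
      + ∑ i, (y i - a i + 2 * ρ * (∑ j, w j * y j) * w i) * (x i - y i)
      + (1 / 2) * ∑ i, (x i - y i) ^ 2 + ρ * (∑ i, w i * (x i - y i)) ^ 2 := by
  set s := ∑ j, w j * y j
  have hlin : ∑ i, w i * x i = s + ∑ i, w i * (x i - y i) := by
    rw [← sum_add_distrib]
    exact sum_congr rfl fun i _ => by ring
  have hgrad : ∑ i, (y i - a i + 2 * ρ * s * w i) * (x i - y i)
      = ∑ i, (y i - a i) * (x i - y i) + 2 * ρ * s * ∑ i, w i * (x i - y i) := by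
    rw [mul_sum univ (fun i => w i * (x i - y i)) (2 * ρ * s), ← sum_add_distrib]
    exact sum_congr rfl fun i _ => by ring
  have hsq : ∑ i, (x i - a i) ^ 2
      = ∑ i, (y i - a i) ^ 2 + 2 * ∑ i, (y i - a i) * (x i - y i) + ∑ i, (x i - y i) ^ 2 := by
    rw [mul_sum, ← sum_add_distrib, ← sum_add_distrib]
    exact sum_congr rfl fun i _ => by ring
  rw [quadObj, quadObj, hlin, hgrad, hsq]
  ring

theorem quadObj_add_le_of_fixedPoint {ρ : ℝ} (hρ : 0 ≤ ρ) {w a y : ι → ℝ}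
    (hy : ∀ i, y i = max (a i - 2 * ρ * (∑ j, w j * y j) * w i) 0) {x : ι → ℝ}
    (hx : ∀ i, 0 ≤ x i) :
    quadObj ρ w a y + (1 / 2) * ∑ i, (x i - y i) ^ 2 ≤ quadObj ρ w a x := by
  set s := ∑ j, w j * y j
  -- the gradient at `y` is `t⁺ - t ≥ 0` with `t = a - 2ρsw`, and it vanishes where `y = t⁺ > 0`
  have hkkt : ∀ i, 0 ≤ (y i - a i + 2 * ρ * s * w i) * (x i - y i) := by
    intro i
    rw [hy i]
    rcases le_total (a i - 2 * ρ * s * w i) 0 with h | h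
    · rw [max_eq_right h]
      nlinarith [hx i]
    · rw [max_eq_left h]
      exact le_of_eq (by ring)
  rw [quadObj_eq_taylor ρ w a x y]
  have hsq : 0 ≤ ρ * (∑ i, w i * (x i - y i)) ^ 2 := by positivity
  linarith [sum_nonneg fun i (_ : i ∈ univ) => hkkt i]

end Objective

theorem stmt0_general (n : ℕ) (ρ : ℝ) (hρ : 0 < ρ)
    (w a : Fin n → ℝ) (hw : ∀ i, 0 < w i) (ha : ∀ i, 0 ≤ a i)
    (hmono : ∀ i j : Fin n, i ≤ j → a j / w j ≤ a i / w i)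
    (α : Fin n → ℝ)
    (hα : ∀ i, α i = (∑ j ∈ Finset.Iic i, w j * a j) /
        (1 + 2 * ρ * ∑ j ∈ Finset.Iic i, (w j) ^ 2))
    (αbar : ℝ) (hαbar1 : ∃ k, αbar = α k) (hαbar2 : ∀ i, α i ≤ αbar)
    (f : (Fin n → ℝ) → ℝ)
    (hf : ∀ x, f x = (1 / 2) * ∑ i, (x i - a i) ^ 2 + ρ * (∑ i, w i * x i) ^ 2)
    (xstar : Fin n → ℝ)
    (hxstar : ∀ i, xstar i = max (a i - 2 * ρ * αbar * w i) 0) :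
    (∀ i, 0 ≤ xstar i) ∧
    (∀ x : Fin n → ℝ, (∀ i, 0 ≤ x i) → f xstar ≤ f x) ∧
    (∀ x : Fin n → ℝ, (∀ i, 0 ≤ x i) → f x = f xstar → x = xstar) := by
  obtain ⟨k, rfl⟩ := hαbar1
  obtain rfl : α = prefixRatio ρ w a := funext hα
  obtain rfl : f = quadObj ρ w a := funext hf
  have hsum : ∑ j, w j * xstar j = prefixRatio ρ w a k := by
    simp only [hxstar]
    exact sum_mul_max_sub_eq_prefixRatio hρ.le hw ha hmono hαbar2
  have hbound := fun (x : Fin n → ℝ) (hx : ∀ i, 0 ≤ x i) =>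
    quadObj_add_le_of_fixedPoint hρ.le (y := xstar) (by rwa [hsum]) hx
  have hsq : ∀ x : Fin n → ℝ, 0 ≤ ∑ i, (x i - xstar i) ^ 2 :=
    fun x => sum_nonneg fun i _ => sq_nonneg _
  refine ⟨fun i => (hxstar i).symm ▸ le_max_right _ _,
    fun x hx => by linarith [hbound x hx, hsq x], fun x hx hfx => ?_⟩
  have hzero : ∑ i, (x i - xstar i) ^ 2 = 0 := by linarith [hbound x hx, hsq x]
  funext i
  have hi :=
    (sum_eq_zero_iff_of_nonneg fun i _ => sq_nonneg (x i - xstar i)).mp hzero i (mem_univ i)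
  exact sub_eq_zero.mp (pow_eq_zero_iff two_ne_zero |>.mp hi)

theorem stmt0 (n : ℕ) (hn : 0 < n) (ρ : ℝ) (hρ : 0 < ρ)
    (w a : Fin n → ℝ) (hw : ∀ i, 0 < w i) (ha : ∀ i, 0 ≤ a i) (ha0 : a ≠ 0)
    (hmono : ∀ i j : Fin n, i ≤ j → a j / w j ≤ a i / w i)
    (α : Fin n → ℝ)
    (hα : ∀ i, α i = (∑ j ∈ Finset.Iic i, w j * a j) /
        (1 + 2 * ρ * ∑ j ∈ Finset.Iic i, (w j) ^ 2))
    (αbar : ℝ) (hαbar1 : ∃ k, αbar = α k) (hαbar2 : ∀ i, α i ≤ αbar)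
    (f : (Fin n → ℝ) → ℝ)
    (hf : ∀ x, f x = (1 / 2) * ∑ i, (x i - a i) ^ 2 + ρ * (∑ i, w i * x i) ^ 2)
    (xstar : Fin n → ℝ)
    (hxstar : ∀ i, xstar i = max (a i - 2 * ρ * αbar * w i) 0) :
    (∀ i, 0 ≤ xstar i) ∧
    (∀ x : Fin n → ℝ, (∀ i, 0 ≤ x i) → f xstar ≤ f x) ∧
    (∀ x : Fin n → ℝ, (∀ i, 0 ≤ x i) → f x = f xstar → x = xstar) :=
  stmt0_general n ρ hρ w a hw ha hmono α hα αbar hαbar1 hαbar2 f hf xstar hxstar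
end

section
/- Let ρ > 0, n ≥ 1, w ∈ ℝⁿ with wᵢ > 0 for all i, and a ∈ ℝⁿ with aᵢ ≥ 0 for all i and a ≠ 0, with the ratios aᵢ/wᵢ nonincreasing in i. Define sᵢ, Lᵢ, αᵢ and ᾱ = max_{1≤i≤n} αᵢ as usual. Then ᾱ is a fixed point of the map β ↦ Σ_{i=1}^{n} wᵢ·max(aᵢ − 2ρβwᵢ, 0); that is, ᾱ = Σ_{i=1}^{n} wᵢ (aᵢ − 2ρᾱwᵢ)⁺. -/
/-!
Write `g_m(β) = ∑_{i ≤ m} wᵢ (aᵢ - 2ρβwᵢ) = s_m - 2ρβL_m`, so that `α_m` is the unique fixed point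
of the decreasing affine map `g_m`, and `g_m(β) ≤ α_m` for `β ≥ α_m`. Since `aᵢ/wᵢ` is
nonincreasing, the indices with `aᵢ - 2ρβwᵢ > 0` form an initial segment, so the sum of positive
parts at `β` is `0` or some `g_m(β)`; at `β = ᾱ` this is `≤ ᾱ`. Conversely it dominates every
`g_m(ᾱ)`, in particular `g_k(ᾱ) = α_k = ᾱ` for a maximizing index `k`.
-/

open Finset

lemma sum_mul_sub_mul {ι : Type*} (s : Finset ι) (w a : ι → ℝ) (t : ℝ) :
    ∑ i ∈ s, w i * (a i - t * w i) = ∑ i ∈ s, w i * a i - t * ∑ i ∈ s, w i ^ 2 := by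
  simp only [mul_sub, sum_sub_distrib, mul_sum]
  congr 1
  exact sum_congr rfl fun i _ => by ring

lemma sub_mul_div_one_add_mul {s c L : ℝ} (h : 1 + c * L ≠ 0) :
    s - c * (s / (1 + c * L)) * L = s / (1 + c * L) := by
  field_simp
  ring

lemma sub_mul_le_div_one_add_mul {s c L β : ℝ} (hc : 0 ≤ c) (hL : 0 ≤ L)
    (hβ : s / (1 + c * L) ≤ β) : s - c * β * L ≤ s / (1 + c * L) := by
  have h : c * (s / (1 + c * L)) * L ≤ c * β * L := by gcongr
  linarith [sub_mul_div_one_add_mul (s := s) (by positivity : 1 + c * L ≠ 0)]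

section PositivePart

variable {ι : Type*} [LinearOrder ι] [Fintype ι] [LocallyFiniteOrderBot ι]

lemma sum_mul_max_sub_eq_zero_or_eq_sum_Iic {w a : ι → ℝ} (hw : ∀ i, 0 < w i)
    (hmono : Antitone fun i => a i / w i) (t : ℝ) :
    ∑ i, w i * max (a i - t * w i) 0 = 0 ∨
      ∃ m, ∑ i, w i * max (a i - t * w i) 0 = ∑ i ∈ Iic m, w i * (a i - t * w i) := by
  classical
  set P := univ.filter fun i => t < a i / w i
  have hsum : ∑ i, w i * max (a i - t * w i) 0 = ∑ i ∈ P, w i * (a i - t * w i) := by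
    rw [sum_filter]
    refine sum_congr rfl fun i _ => ?_
    have hpos : t < a i / w i ↔ 0 < a i - t * w i := by
      rw [lt_div_iff₀ (hw i), sub_pos]
    split_ifs with h
    · rw [max_eq_left (hpos.mp h).le]
    · rw [max_eq_right (not_lt.mp (mt hpos.mpr h)), mul_zero]
  rcases P.eq_empty_or_nonempty with hP | hP
  · exact Or.inl (by rw [hsum, hP, sum_empty])
  · refine Or.inr ⟨P.max' hP, ?_⟩
    rw [hsum]
    congr 1
    ext i
    have hmax : t < a (P.max' hP) / w (P.max' hP) := (mem_filter.mp (P.max'_mem hP)).2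
    simp only [P, mem_filter, mem_univ, true_and, mem_Iic]
    exact ⟨fun h => P.le_max' i (mem_filter.mpr ⟨mem_univ i, h⟩),
      fun h => hmax.trans_le (hmono h)⟩

end PositivePart

theorem stmt2_general (n : ℕ) (ρ : ℝ) (hρ : 0 < ρ)
    (w a : Fin n → ℝ) (hw : ∀ i, 0 < w i) (ha : ∀ i, 0 ≤ a i)
    (hmono : ∀ i j : Fin n, i ≤ j → a j / w j ≤ a i / w i)
    (α : Fin n → ℝ)
    (hα : ∀ i, α i = (∑ j ∈ Finset.Iic i, w j * a j) /
        (1 + 2 * ρ * ∑ j ∈ Finset.Iic i, (w j) ^ 2))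
    (αbar : ℝ) (hαbar1 : ∃ k, αbar = α k) (hαbar2 : ∀ i, α i ≤ αbar) :
    αbar = ∑ i, w i * max (a i - 2 * ρ * αbar * w i) 0 := by
  obtain ⟨k, rfl⟩ := hαbar1
  have hc : 0 ≤ 2 * ρ := by positivity
  have hL : ∀ m : Fin n, 0 ≤ ∑ j ∈ Iic m, w j ^ 2 := fun m => by positivity
  apply le_antisymm
  · calc α k = ∑ i ∈ Iic k, w i * (a i - 2 * ρ * α k * w i) := by
          rw [sum_mul_sub_mul, hα k,
            sub_mul_div_one_add_mul (by have := hL k; positivity)]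
      _ ≤ ∑ i ∈ Iic k, w i * max (a i - 2 * ρ * α k * w i) 0 :=
          sum_le_sum fun i _ => mul_le_mul_of_nonneg_left (le_max_left _ _) (hw i).le
      _ ≤ ∑ i, w i * max (a i - 2 * ρ * α k * w i) 0 :=
          sum_le_univ_sum_of_nonneg fun i => mul_nonneg (hw i).le (le_max_right _ _)
  · rcases sum_mul_max_sub_eq_zero_or_eq_sum_Iic hw hmono (2 * ρ * α k) with h | ⟨m, h⟩
    · rw [h, hα k]
      have := hL k
      exact div_nonneg (sum_nonneg fun j _ => mul_nonneg (hw j).le (ha j)) (by positivity)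
    · rw [h, sum_mul_sub_mul]
      calc _ ≤ α m := by
            rw [hα m]
            exact sub_mul_le_div_one_add_mul hc (hL m) (hα m ▸ hαbar2 m)
        _ ≤ α k := hαbar2 m

theorem stmt2 (n : ℕ) (hn : 0 < n) (ρ : ℝ) (hρ : 0 < ρ)
    (w a : Fin n → ℝ) (hw : ∀ i, 0 < w i) (ha : ∀ i, 0 ≤ a i) (ha0 : a ≠ 0)
    (hmono : ∀ i j : Fin n, i ≤ j → a j / w j ≤ a i / w i)
    (α : Fin n → ℝ)
    (hα : ∀ i, α i = (∑ j ∈ Finset.Iic i, w j * a j) /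
        (1 + 2 * ρ * ∑ j ∈ Finset.Iic i, (w j) ^ 2))
    (αbar : ℝ) (hαbar1 : ∃ k, αbar = α k) (hαbar2 : ∀ i, α i ≤ αbar) :
    αbar = ∑ i, w i * max (a i - 2 * ρ * αbar * w i) 0 :=
  stmt2_general n ρ hρ w a hw ha hmono α hα αbar hαbar1 hαbar2
end

section
/- Let ρ > 0, n ≥ 1, w ∈ ℝⁿ with wᵢ > 0 for all i, and a ∈ ℝⁿ with aᵢ ≥ 0 for all i. Then the unique minimizer x* over all of ℝⁿ of F_a(x) = (1/2)‖x − a‖₂² + ρ(Σ_{i=1}^{n} wᵢ|xᵢ|)² has all coordinates nonnegative; consequently x* coincides with the unique minimizer of F_a over the nonnegative orthant {x ∈ ℝⁿ : xᵢ ≥ 0 for all i}. -/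
/-!
Reflecting a point into the nonnegative orthant, `x ↦ |x|`, leaves the penalty
`ρ (∑ wᵢ |xᵢ|)²` unchanged and, since `a ≥ 0`, moves every coordinate no farther from `a`.
So `|x*|` is also a minimizer, and uniqueness forces `x* = |x*| ≥ 0`.
-/

open Finset

noncomputable def exclusiveLassoObjective {ι : Type*} [Fintype ι] (ρ : ℝ) (w a : ι → ℝ)
    (x : ι → ℝ) : ℝ :=
  (1 / 2) * ∑ i, (x i - a i) ^ 2 + ρ * (∑ i, w i * |x i|) ^ 2

lemma sq_abs_sub_le_sq_sub {x a : ℝ} (ha : 0 ≤ a) : (|x| - a) ^ 2 ≤ (x - a) ^ 2 := by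
  rw [sq_le_sq]
  simpa [abs_of_nonneg ha] using abs_abs_sub_abs_le_abs_sub x a

lemma exclusiveLassoObjective_abs_le {ι : Type*} [Fintype ι] (ρ : ℝ) (w : ι → ℝ)
    {a : ι → ℝ} (ha : ∀ i, 0 ≤ a i) (x : ι → ℝ) :
    exclusiveLassoObjective ρ w a (fun i => |x i|) ≤ exclusiveLassoObjective ρ w a x := by
  unfold exclusiveLassoObjective
  simp only [abs_abs]
  gcongr (1 / 2) * ?_ + _
  exact sum_le_sum fun i _ => sq_abs_sub_le_sq_sub (ha i)

theorem stmt3_general (n : ℕ) (ρ : ℝ)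
    (w a : Fin n → ℝ) (ha : ∀ i, 0 ≤ a i)
    (F : (Fin n → ℝ) → ℝ)
    (hF : ∀ x, F x = (1 / 2) * ∑ i, (x i - a i) ^ 2 + ρ * (∑ i, w i * |x i|) ^ 2)
    (xstar : Fin n → ℝ)
    (hmin : ∀ x, F xstar ≤ F x)
    (huniq : ∀ x, F x = F xstar → x = xstar) :
    (∀ i, 0 ≤ xstar i) ∧
    (∀ x : Fin n → ℝ, (∀ i, 0 ≤ x i) → F xstar ≤ F x) ∧
    (∀ x : Fin n → ℝ, (∀ i, 0 ≤ x i) → F x = F xstar → x = xstar) := by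
  obtain rfl : F = exclusiveLassoObjective ρ w a := funext hF
  have habs : (fun i => |xstar i|) = xstar :=
    huniq _ (le_antisymm (exclusiveLassoObjective_abs_le ρ w ha xstar) (hmin _))
  refine ⟨fun i => ?_, fun x _ => hmin x, fun x _ => huniq x⟩
  rw [← habs]
  exact abs_nonneg _

theorem stmt3 (n : ℕ) (hn : 0 < n) (ρ : ℝ) (hρ : 0 < ρ)
    (w a : Fin n → ℝ) (hw : ∀ i, 0 < w i) (ha : ∀ i, 0 ≤ a i)
    (F : (Fin n → ℝ) → ℝ)
    (hF : ∀ x, F x = (1 / 2) * ∑ i, (x i - a i) ^ 2 + ρ * (∑ i, w i * |x i|) ^ 2)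
    (xstar : Fin n → ℝ)
    (hmin : ∀ x, F xstar ≤ F x)
    (huniq : ∀ x, F x = F xstar → x = xstar) :
    (∀ i, 0 ≤ xstar i) ∧
    (∀ x : Fin n → ℝ, (∀ i, 0 ≤ x i) → F xstar ≤ F x) ∧
    (∀ x : Fin n → ℝ, (∀ i, 0 ≤ x i) → F x = F xstar → x = xstar) :=
  stmt3_general n ρ w a ha F hF xstar hmin huniq
end

section
/- Let n ≥ 1, ρ > 0, w ∈ ℝⁿ, and let Σ ∈ ℝ^{n×n} be a diagonal matrix whose diagonal entries all belong to {0, 1}. Set ŵ = Σw, A = Σ + 2ρ ŵŵᵀ, and M = Σ − (2ρ/(1 + 2ρ ŵᵀŵ)) ŵŵᵀ. Then M is the Moore–Penrose pseudoinverse of A; that is, AMA = A, MAM = M, (AM)ᵀ = AM, and (MA)ᵀ = MA. -/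
/-!
On the range of the orthogonal projection Σ the rank-one update Σ + a ŵŵᵀ is inverted by the
Sherman–Morrison formula Σ − a/(1 + a ŵᵀŵ) ŵŵᵀ, while both matrices vanish on its kernel. Hence
A M = M A = Σ, and the four Penrose identities reduce to Σ being symmetric and fixing A and M.
-/

open Matrix

section ShermanMorrison

variable {R B : Type*} [CommRing R] [Ring B] [Algebra R B]
  {s u : B} {a b c : R}

theorem add_smul_mul_sub_smul_eq_of_isIdempotentElem (hs : IsIdempotentElem s)
    (hsu : s * u = u) (hus : u * s = u) (huu : u * u = c • u) (hb : b * (1 + a * c) = a) :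
    (s + a • u) * (s - b • u) = s := calc
  (s + a • u) * (s - b • u) = s + (a - b - a * b * c) • u := by
    simp only [add_mul, mul_sub, mul_smul_comm, smul_mul_assoc, hs.eq, hsu, hus, huu, smul_smul]
    module
  _ = s := by rw [show a - b - a * b * c = 0 by linear_combination -hb, zero_smul, add_zero]

theorem sub_smul_mul_add_smul_eq_of_isIdempotentElem (hs : IsIdempotentElem s)
    (hsu : s * u = u) (hus : u * s = u) (huu : u * u = c • u) (hb : b * (1 + a * c) = a) :
    (s - b • u) * (s + a • u) = s := calc
  (s - b • u) * (s + a • u) = s + (a - b - b * a * c) • u := by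
    simp only [sub_mul, mul_add, mul_smul_comm, smul_mul_assoc, hs.eq, hsu, hus, huu, smul_smul]
    module
  _ = s := by rw [show a - b - b * a * c = 0 by linear_combination -hb, zero_smul, add_zero]

end ShermanMorrison

namespace Matrix

variable {ι R : Type*} [Fintype ι] [CommRing R]

theorem penrose_of_mul_eq_isSymm {A M P : Matrix ι ι R} (hAM : A * M = P) (hMA : M * A = P)
    (hPA : P * A = A) (hPM : P * M = M) (hP : P.IsSymm) :
    A * M * A = A ∧ M * A * M = M ∧ (A * M)ᵀ = A * M ∧ (M * A)ᵀ = M * A :=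
  ⟨by rw [hAM, hPA], by rw [hMA, hPM], by rw [hAM, hP.eq], by rw [hMA, hP.eq]⟩

theorem vecMulVec_self_mul_self (v : ι → R) :
    vecMulVec v v * vecMulVec v v = (∑ i, v i ^ 2) • vecMulVec v v := by
  rw [vecMulVec_mul_vecMulVec, vecMulVec_smul]
  simp only [dotProduct, sq]

theorem mul_vecMulVec_self_of_mulVec_eq {S : Matrix ι ι R} {v : ι → R} (hv : S *ᵥ v = v) :
    S * vecMulVec v v = vecMulVec v v := by
  rw [mul_vecMulVec, hv]

theorem vecMulVec_self_mul_of_mulVec_eq {S : Matrix ι ι R} (hS : S.IsSymm) {v : ι → R}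
    (hv : S *ᵥ v = v) : vecMulVec v v * S = vecMulVec v v := by
  rw [vecMulVec_mul, ← hS.eq, vecMul_transpose, hv]

theorem isIdempotentElem_diagonal [DecidableEq ι] {d : ι → R} (hd : ∀ i, d i = 0 ∨ d i = 1) :
    IsIdempotentElem (diagonal d) := by
  refine (diagonal_mul_diagonal d d).trans (congrArg diagonal (funext fun i => ?_))
  rcases hd i with h | h <;> simp [h]

end Matrix

theorem stmt6_general (n : ℕ) (ρ : ℝ) (hρ : 0 < ρ)
    (w d : Fin n → ℝ) (hd : ∀ i, d i = 0 ∨ d i = 1)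
    (S : Matrix (Fin n) (Fin n) ℝ) (hS : S = Matrix.diagonal d)
    (what : Fin n → ℝ) (hwhat : what = S.mulVec w)
    (A M : Matrix (Fin n) (Fin n) ℝ)
    (hA : A = S + (2 * ρ) • Matrix.vecMulVec what what)
    (hM : M = S - (2 * ρ / (1 + 2 * ρ * ∑ i, what i ^ 2)) • Matrix.vecMulVec what what) :
    A * M * A = A ∧ M * A * M = M ∧ (A * M)ᵀ = A * M ∧ (M * A)ᵀ = M * A := by
  have hSS : IsIdempotentElem S := hS ▸ isIdempotentElem_diagonal hd
  have hSsymm : S.IsSymm := hS ▸ isSymm_diagonal d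
  have hv : S *ᵥ what = what := by rw [hwhat, mulVec_mulVec, hSS.eq]
  have hSV := mul_vecMulVec_self_of_mulVec_eq hv
  have hVS := vecMulVec_self_mul_of_mulVec_eq hSsymm hv
  have hb : 2 * ρ / (1 + 2 * ρ * ∑ i, what i ^ 2) * (1 + 2 * ρ * ∑ i, what i ^ 2) = 2 * ρ :=
    div_mul_cancel₀ _ (by positivity)
  subst hA hM
  refine penrose_of_mul_eq_isSymm
    (add_smul_mul_sub_smul_eq_of_isIdempotentElem hSS hSV hVS (vecMulVec_self_mul_self _) hb)
    (sub_smul_mul_add_smul_eq_of_isIdempotentElem hSS hSV hVS (vecMulVec_self_mul_self _) hb)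
    ?_ ?_ hSsymm
  · rw [mul_add, mul_smul_comm, hSS.eq, hSV]
  · rw [mul_sub, mul_smul_comm, hSS.eq, hSV]

theorem stmt6 (n : ℕ) (hn : 0 < n) (ρ : ℝ) (hρ : 0 < ρ)
    (w d : Fin n → ℝ) (hd : ∀ i, d i = 0 ∨ d i = 1)
    (S : Matrix (Fin n) (Fin n) ℝ) (hS : S = Matrix.diagonal d)
    (what : Fin n → ℝ) (hwhat : what = S.mulVec w)
    (A M : Matrix (Fin n) (Fin n) ℝ)
    (hA : A = S + (2 * ρ) • Matrix.vecMulVec what what)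
    (hM : M = S - (2 * ρ / (1 + 2 * ρ * ∑ i, what i ^ 2)) • Matrix.vecMulVec what what) :
    A * M * A = A ∧ M * A * M = M ∧ (A * M)ᵀ = A * M ∧ (M * A)ᵀ = M * A :=
  stmt6_general n ρ hρ w d hd S hS what hwhat A M hA hM
end

section
/- Let A : ℝⁿ → ℝᵐ be a linear map, c ∈ ℝⁿ, let h : ℝᵐ → ℝ be convex and differentiable, and let p : ℝⁿ → ℝ be convex. Define f(x) = h(Ax) − ⟨c, x⟩ + p(x) and the proximal residual R(x) = x − Prox_p(x − A*∇h(Ax) + c). If y ∈ ℝⁿ is a subgradient of f at x, i.e., f(z) ≥ f(x) + ⟨y, z − x⟩ for all z ∈ ℝⁿ, then ‖R(x)‖₂ ≤ ‖y‖₂. -/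
/-!
Write `g = A*∇h(Ax)` and `u = x - g + c`. Since `h ∘ A - ⟪c, ·⟫` is differentiable with gradient
`g - c` at `x` and `p` is convex, a subgradient `y` of `f` at `x` yields the subgradient `y - g + c`
of `p` at `x`. Likewise the optimality of `q = Prox_p(u)` says that `u - q` is a subgradient of `p`
at `q`. Monotonicity of the subdifferential of `p` then gives `0 ≤ ⟪y - (x - q), x - q⟫`, hence
`‖x - q‖² ≤ ⟪y, x - q⟫ ≤ ‖y‖ ‖x - q‖`.
-/

open Set InnerProductSpace
open scoped RealInnerProductSpace

section
variable {E F : Type*} [NormedAddCommGroup E] [InnerProductSpace ℝ E]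
  [NormedAddCommGroup F] [InnerProductSpace ℝ F]

def HasSubgradientAt (φ : E → ℝ) (y x : E) : Prop :=
  ∀ z, φ x + ⟪y, z - x⟫ ≤ φ z

theorem HasSubgradientAt.inner_sub_nonneg {φ : E → ℝ} {a b x q : E}
    (ha : HasSubgradientAt φ a x) (hb : HasSubgradientAt φ b q) : 0 ≤ ⟪a - b, x - q⟫ := by
  have h₁ := ha q
  have h₂ := hb x
  rw [← neg_sub x q, inner_neg_right] at h₁
  rw [inner_sub_left]
  linarith

theorem norm_le_norm_of_inner_sub_nonneg {y w : E} (h : 0 ≤ ⟪y - w, w⟫) : ‖w‖ ≤ ‖y‖ := by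
  rw [inner_sub_left, real_inner_self_eq_norm_sq] at h
  have := real_inner_le_norm y w
  nlinarith [norm_nonneg w, norm_nonneg y]

theorem ConvexOn.le_add_smul_sub {φ : E → ℝ} (hφ : ConvexOn ℝ univ φ) (x z : E) {t : ℝ}
    (ht : t ∈ Icc (0 : ℝ) 1) : φ (x + t • (z - x)) ≤ φ x + t * (φ z - φ x) := by
  have hcomb : (1 - t) • x + t • z = x + t • (z - x) := by
    rw [sub_smul, one_smul, smul_sub]; abel
  have := hφ.2 (mem_univ x) (mem_univ z) (sub_nonneg.2 ht.2) ht.1 (sub_add_cancel 1 t)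
  rw [hcomb, smul_eq_mul, smul_eq_mul] at this
  linarith

theorem HasGradientAt.sub [CompleteSpace E] {f g : E → ℝ} {f' g' x : E}
    (hf : HasGradientAt f f' x) (hg : HasGradientAt g g' x) :
    HasGradientAt (fun z => f z - g z) (f' - g') x := by
  rw [hasGradientAt_iff_hasFDerivAt] at *
  rw [map_sub]
  exact hf.sub hg

theorem hasGradientAt_inner_right [CompleteSpace E] (c x : E) :
    HasGradientAt (fun z => ⟪c, z⟫) c x :=
  hasGradientAt_iff_hasFDerivAt.2 (toDual ℝ E c).hasFDerivAt

theorem HasGradientAt.comp_continuousLinearMap [CompleteSpace E] [CompleteSpace F]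
    {h : F → ℝ} {g : F} (A : E →L[ℝ] F) {x : E} (hh : HasGradientAt h g (A x)) :
    HasGradientAt (fun z => h (A z)) (A.adjoint g) x := by
  rw [hasGradientAt_iff_hasFDerivAt] at *
  have hdual : toDual ℝ E (A.adjoint g) = (toDual ℝ F g).comp A := by
    ext v
    simp [ContinuousLinearMap.adjoint_inner_left]
  rw [hdual]
  exact hh.comp x A.hasFDerivAt

theorem hasGradientAt_half_norm_sub_sq [CompleteSpace E] (u x : E) :
    HasGradientAt (fun z => (1 / 2) * ‖z - u‖ ^ 2) (x - u) x := by
  rw [hasGradientAt_iff_hasFDerivAt]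
  have hdual : toDual ℝ E (x - u) =
      (1 / 2 : ℝ) • (2 • (innerSL ℝ (x - u)).comp (ContinuousLinearMap.id ℝ E)) := by
    ext v
    simp
  rw [hdual]
  exact ((hasFDerivAt_id x).sub_const u).norm_sq.const_mul (1 / 2 : ℝ)

theorem HasGradientAt.hasDerivAt_add_smul [CompleteSpace E] {f : E → ℝ} {g x : E}
    (hf : HasGradientAt f g x) (d : E) :
    HasDerivAt (fun t : ℝ => f (x + t • d)) ⟪g, d⟫ 0 := by
  have hline : HasDerivAt (fun t : ℝ => x + t • d) d 0 := by
    simpa using ((hasDerivAt_id (0 : ℝ)).smul_const d).const_add x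
  rw [← add_zero x, ← zero_smul ℝ d] at hf
  exact (hasGradientAt_iff_hasFDerivAt.1 hf).comp_hasDerivAt (0 : ℝ) hline

/-- On the segment from `x` to `z`, convexity bounds `φ` by its chord, so `t = 0` minimises
`t ↦ ψ (x + t • (z - x)) + t * (φ z - φ x) - t * ⟪y, z - x⟫` on `[0, 1]`; Fermat's rule at this
endpoint is the claimed subgradient inequality. -/
theorem HasSubgradientAt.sub_of_hasGradientAt_add [CompleteSpace E] {ψ φ : E → ℝ} {x y g : E}
    (hsub : HasSubgradientAt (fun z => ψ z + φ z) y x) (hψ : HasGradientAt ψ g x)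
    (hφ : ConvexOn ℝ univ φ) : HasSubgradientAt φ (y - g) x := by
  intro z
  set d := z - x
  let F : ℝ → ℝ := fun t => ψ (x + t • d) + t * (φ z - φ x) - t * ⟪y, d⟫
  have hF : HasDerivAt F (⟪g, d⟫ + (φ z - φ x) - ⟪y, d⟫) 0 := by
    have hlin : ∀ a : ℝ, HasDerivAt (fun t : ℝ => t * a) a 0 := fun a => by
      simpa using (hasDerivAt_id (0 : ℝ)).mul_const a
    exact ((hψ.hasDerivAt_add_smul d).add (hlin _)).sub (hlin _)
  have hmin : IsLocalMinOn F (Icc 0 1) 0 := by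
    refine Filter.eventually_of_mem self_mem_nhdsWithin fun t ht => ?_
    have hsub_t := hsub (x + t • d)
    have hchord := hφ.le_add_smul_sub x z ht
    simp only [add_sub_cancel_left, inner_smul_right] at hsub_t
    simp only [F, zero_smul, add_zero, zero_mul, sub_zero]
    linarith
  have hdir : (1 : ℝ) ∈ posTangentConeAt (Icc 0 1) 0 :=
    mem_posTangentConeAt_of_segment_subset (by simp [segment_eq_Icc])
  have hslope := hmin.hasFDerivWithinAt_nonneg hF.hasFDerivAt.hasFDerivWithinAt hdir
  simp only [ContinuousLinearMap.toSpanSingleton_apply, one_smul] at hslope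
  rw [inner_sub_left]
  linarith

theorem HasSubgradientAt.of_forall_add_half_norm_sub_sq_le [CompleteSpace E] {p : E → ℝ}
    {u q : E} (hp : ConvexOn ℝ univ p)
    (hq : ∀ z, p q + (1 / 2) * ‖q - u‖ ^ 2 ≤ p z + (1 / 2) * ‖z - u‖ ^ 2) :
    HasSubgradientAt p (u - q) q := by
  have hmin : HasSubgradientAt (fun z => (1 / 2) * ‖z - u‖ ^ 2 + p z) 0 q := fun z => by
    simpa [add_comm] using hq z
  simpa using hmin.sub_of_hasGradientAt_add (hasGradientAt_half_norm_sub_sq u q) hp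

end

theorem stmt10_general (n m : ℕ)
    (A : EuclideanSpace ℝ (Fin n) →L[ℝ] EuclideanSpace ℝ (Fin m))
    (c : EuclideanSpace ℝ (Fin n))
    (h : EuclideanSpace ℝ (Fin m) → ℝ)
    (h' : EuclideanSpace ℝ (Fin m) → EuclideanSpace ℝ (Fin m))
    (hdiff : ∀ y, HasGradientAt h (h' y) y)
    (p : EuclideanSpace ℝ (Fin n) → ℝ) (hp : ConvexOn ℝ Set.univ p)
    (f : EuclideanSpace ℝ (Fin n) → ℝ)
    (hf : ∀ x, f x = h (A x) - (inner ℝ c x : ℝ) + p x)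
    (x y : EuclideanSpace ℝ (Fin n))
    (hsub : ∀ z, f x + (inner ℝ y (z - x) : ℝ) ≤ f z)
    (q : EuclideanSpace ℝ (Fin n))
    (hq : ∀ z, p q + (1 / 2) * ‖q - (x - (ContinuousLinearMap.adjoint A) (h' (A x)) + c)‖ ^ 2 ≤
      p z + (1 / 2) * ‖z - (x - (ContinuousLinearMap.adjoint A) (h' (A x)) + c)‖ ^ 2) :
    ‖x - q‖ ≤ ‖y‖ := by
  set g := ContinuousLinearMap.adjoint A (h' (A x))
  have hsmooth : HasGradientAt (fun z => h (A z) - ⟪c, z⟫) (g - c) x :=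
    ((hdiff (A x)).comp_continuousLinearMap A).sub (hasGradientAt_inner_right c x)
  have hsub_f : HasSubgradientAt (fun z => h (A z) - ⟪c, z⟫ + p z) y x := fun z => by
    simpa only [hf] using hsub z
  have hx : HasSubgradientAt p (y - (g - c)) x := hsub_f.sub_of_hasGradientAt_add hsmooth hp
  have hq' : HasSubgradientAt p (x - g + c - q) q :=
    .of_forall_add_half_norm_sub_sq_le hp hq
  apply norm_le_norm_of_inner_sub_nonneg
  convert hx.inner_sub_nonneg hq' using 2
  abel

theorem stmt10 (n m : ℕ)
    (A : EuclideanSpace ℝ (Fin n) →L[ℝ] EuclideanSpace ℝ (Fin m))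
    (c : EuclideanSpace ℝ (Fin n))
    (h : EuclideanSpace ℝ (Fin m) → ℝ) (hconv : ConvexOn ℝ Set.univ h)
    (h' : EuclideanSpace ℝ (Fin m) → EuclideanSpace ℝ (Fin m))
    (hdiff : ∀ y, HasGradientAt h (h' y) y)
    (p : EuclideanSpace ℝ (Fin n) → ℝ) (hp : ConvexOn ℝ Set.univ p)
    (f : EuclideanSpace ℝ (Fin n) → ℝ)
    (hf : ∀ x, f x = h (A x) - (inner ℝ c x : ℝ) + p x)
    (x y : EuclideanSpace ℝ (Fin n))
    (hsub : ∀ z, f x + (inner ℝ y (z - x) : ℝ) ≤ f z)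
    (q : EuclideanSpace ℝ (Fin n))
    (hq : ∀ z, p q + (1 / 2) * ‖q - (x - (ContinuousLinearMap.adjoint A) (h' (A x)) + c)‖ ^ 2 ≤
      p z + (1 / 2) * ‖z - (x - (ContinuousLinearMap.adjoint A) (h' (A x)) + c)‖ ^ 2) :
    ‖x - q‖ ≤ ‖y‖ :=
  stmt10_general n m A c h h' hdiff p hp f hf x y hsub q hq
end

section
/- Let A : ℝⁿ → ℝᵐ be a linear map, c ∈ ℝⁿ, x̃ ∈ ℝⁿ, σ > 0, let p : ℝⁿ → ℝ be convex, and let h* : ℝᵐ → ℝ be strongly convex with modulus α > 0 (i.e., h* − (α/2)‖·‖₂² is convex). Define φ(u) = −h*(u) − (1/(2σ))‖x̃ + σc − σA*u‖₂² + (1/σ) E_{σp}(x̃ + σc − σA*u) for u ∈ ℝᵐ, where E_{σp} is the Moreau envelope of σp. Then φ is strongly concave with modulus α; that is, −φ − (α/2)‖·‖₂² is convex, and consequently φ has a unique maximizer over ℝᵐ. -/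
/-!
For every `y`, `½‖v‖² - (σ p y + ½‖y - v‖²) = ⟪y, v⟫ - ½‖y‖² - σ p y` is affine in `v`, so
`½‖v‖² - E_{σp}(v)` is a pointwise maximum of affine functions, hence convex. Composing with the
affine map `u ↦ x̃ + σc - σA*u`, scaling by `1/σ` and adding the convex `h* - (α/2)‖·‖²` gives
exactly `-φ - (α/2)‖·‖²`. A strongly convex function on a finite-dimensional space lies above
`(α/2)‖·‖²` plus an affine function, so it is coercive and attains its minimum, which is unique
by strict convexity.
-/

open Set Filter

section Minimizer

variable {E : Type*} [NormedAddCommGroup E] [InnerProductSpace ℝ E] [FiniteDimensional ℝ E]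
  {f : E → ℝ} {m : ℝ}

lemma StrongConvexOn.continuous (hf : StrongConvexOn univ m f) : Continuous f := by
  have hg := (strongConvexOn_iff_convex.mp hf).continuousOn isOpen_univ
  rw [continuousOn_univ] at hg
  exact (hg.add (by fun_prop : Continuous fun x : E => m / 2 * ‖x‖ ^ 2)).congr
    fun _ => sub_add_cancel _ _

lemma StrongConvexOn.tendsto_cocompact_atTop (hf : StrongConvexOn univ m f) (hm : 0 < m) :
    Tendsto f (cocompact E) atTop := by
  have hg := strongConvexOn_iff_convex.mp hf
  have hg_cont := continuousOn_univ.mp (hg.continuousOn isOpen_univ)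
  obtain ⟨l, c, hlc, -⟩ := hg.exists_affine_le_of_lt (𝕜 := ℝ) (x := 0) (a := f 0 - 1) (mem_univ _)
    (by simp) isClosed_univ (hg_cont.lowerSemicontinuous.lowerSemicontinuousOn univ)
  have hlower : ∀ x, ‖x‖ * (m / 2 * ‖x‖ - ‖l‖) + c ≤ f x := by
    intro x
    have h1 := hlc ⟨x, mem_univ x⟩
    have h2 := neg_le_of_abs_le (l.le_opNorm x)
    simp only [Pi.add_apply, domRestrict_apply, Function.comp_apply, RCLike.re_to_real,
      Function.const_apply] at h1
    linarith
  refine tendsto_atTop_mono hlower ?_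
  refine Tendsto.comp (g := fun r => r * (m / 2 * r - ‖l‖) + c) ?_ tendsto_norm_cocompact_atTop
  refine tendsto_atTop_add_const_right _ _ (tendsto_id.atTop_mul_atTop₀ ?_)
  exact tendsto_atTop_add_const_right _ _ (tendsto_id.const_mul_atTop (by positivity))

lemma StrongConvexOn.exists_unique_forall_le (hf : StrongConvexOn univ m f) (hm : 0 < m) :
    ∃! u, ∀ v, f u ≤ f v := by
  obtain ⟨u, hu⟩ := hf.continuous.exists_forall_le (hf.tendsto_cocompact_atTop hm)
  refine ⟨u, hu, fun w hw => ?_⟩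
  exact (hf.strictConvexOn hm).eq_of_isMinOn (isMinOn_univ_iff.mpr hw)
    (isMinOn_univ_iff.mpr hu) (mem_univ _) (mem_univ _)

end Minimizer

lemma ConvexOn.of_forall_le_of_exists_eq {E ι : Type*} [AddCommMonoid E] [Module ℝ E] {s : Set E}
    {h : E → ℝ} (hs : Convex ℝ s) (ℓ : ι → E → ℝ) (hℓ : ∀ i, ConvexOn ℝ s (ℓ i))
    (hle : ∀ i, ∀ x ∈ s, ℓ i x ≤ h x) (heq : ∀ x ∈ s, ∃ i, h x = ℓ i x) : ConvexOn ℝ s h := by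
  refine ⟨hs, fun x hx y hy a b ha hb hab => ?_⟩
  obtain ⟨i, hi⟩ := heq _ (hs hx hy ha hb hab)
  calc h (a • x + b • y) = ℓ i (a • x + b • y) := hi
    _ ≤ a • ℓ i x + b • ℓ i y := (hℓ i).2 hx hy ha hb hab
    _ ≤ a • h x + b • h y := by gcongr <;> exact hle i _ ‹_›

section Moreau

variable {F : Type*} [NormedAddCommGroup F] [InnerProductSpace ℝ F]

def IsMoreauEnvelope (g e : F → ℝ) : Prop :=
  ∀ v, IsLeast (range fun y => g y + 1 / 2 * ‖y - v‖ ^ 2) (e v)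

lemma IsMoreauEnvelope.convexOn_half_sq_norm_sub {g e : F → ℝ} (he : IsMoreauEnvelope g e) :
    ConvexOn ℝ univ fun v => 1 / 2 * ‖v‖ ^ 2 - e v := by
  have half_sq_sub_eq : ∀ y v, 1 / 2 * ‖v‖ ^ 2 - (g y + 1 / 2 * ‖y - v‖ ^ 2)
      = inner ℝ y v - (g y + 1 / 2 * ‖y‖ ^ 2) := fun y v => by
    rw [norm_sub_sq_real]; ring
  refine .of_forall_le_of_exists_eq convex_univ
    (fun y v => inner ℝ y v - (g y + 1 / 2 * ‖y‖ ^ 2))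
    (fun y => ((innerₗ F y).convexOn convex_univ).sub (concaveOn_const _ convex_univ))
    (fun y v _ => ?_) (fun v _ => ?_)
  · rw [← half_sq_sub_eq]
    have := (he v).2 ⟨y, rfl⟩
    linarith
  · obtain ⟨y, hy⟩ := (he v).1
    exact ⟨y, by rw [← half_sq_sub_eq, ← hy]⟩

end Moreau

theorem stmt14_general (n m : ℕ)
    (A : EuclideanSpace ℝ (Fin n) →L[ℝ] EuclideanSpace ℝ (Fin m))
    (c xt : EuclideanSpace ℝ (Fin n)) (σ : ℝ) (hσ : 0 < σ)
    (p : EuclideanSpace ℝ (Fin n) → ℝ)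
    (hstar : EuclideanSpace ℝ (Fin m) → ℝ) (α : ℝ) (hα : 0 < α)
    (hstrong : ConvexOn ℝ Set.univ
      (fun u : EuclideanSpace ℝ (Fin m) => hstar u - (α / 2) * ‖u‖ ^ 2))
    (E : EuclideanSpace ℝ (Fin n) → ℝ)
    (hE : ∀ v, (∃ y, E v = σ * p y + (1 / 2) * ‖y - v‖ ^ 2) ∧
      ∀ y, E v ≤ σ * p y + (1 / 2) * ‖y - v‖ ^ 2)
    (φ : EuclideanSpace ℝ (Fin m) → ℝ)
    (hφ : ∀ u, φ u = -hstar u -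
        (1 / (2 * σ)) * ‖xt + σ • c - σ • (ContinuousLinearMap.adjoint A) u‖ ^ 2 +
        (1 / σ) * E (xt + σ • c - σ • (ContinuousLinearMap.adjoint A) u)) :
    ConvexOn ℝ Set.univ
      (fun u : EuclideanSpace ℝ (Fin m) => -φ u - (α / 2) * ‖u‖ ^ 2) ∧
    ∃! u : EuclideanSpace ℝ (Fin m), ∀ v, φ v ≤ φ u := by
  have hEnv : IsMoreauEnvelope (fun y => σ * p y) E := fun v =>
    ⟨(hE v).1.imp fun y hy => hy.symm, forall_mem_range.mpr (hE v).2⟩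
  let w : EuclideanSpace ℝ (Fin m) →ᵃ[ℝ] EuclideanSpace ℝ (Fin n) :=
    AffineMap.const ℝ _ (xt + σ • c) - (σ • ContinuousLinearMap.adjoint A).toLinearMap.toAffineMap
  have w_apply : ∀ u, w u = xt + σ • c - σ • ContinuousLinearMap.adjoint A u := fun _ => rfl
  have hw : ConvexOn ℝ univ fun u =>
      (1 / σ) * (1 / 2 * ‖w u‖ ^ 2 - E (w u)) :=
    (hEnv.convexOn_half_sq_norm_sub.comp_affineMap w).smul (by positivity)
  have hconv : ConvexOn ℝ univ fun u => -φ u - α / 2 * ‖u‖ ^ 2 := by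
    refine (hstrong.add hw).congr fun u _ => ?_
    simp only [Pi.add_apply, w_apply, hφ]
    ring
  refine ⟨hconv, ?_⟩
  simpa only [neg_le_neg_iff] using (strongConvexOn_iff_convex.mpr hconv).exists_unique_forall_le hα

theorem stmt14 (n m : ℕ)
    (A : EuclideanSpace ℝ (Fin n) →L[ℝ] EuclideanSpace ℝ (Fin m))
    (c xt : EuclideanSpace ℝ (Fin n)) (σ : ℝ) (hσ : 0 < σ)
    (p : EuclideanSpace ℝ (Fin n) → ℝ) (hp : ConvexOn ℝ Set.univ p)
    (hstar : EuclideanSpace ℝ (Fin m) → ℝ) (α : ℝ) (hα : 0 < α)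
    (hstrong : ConvexOn ℝ Set.univ
      (fun u : EuclideanSpace ℝ (Fin m) => hstar u - (α / 2) * ‖u‖ ^ 2))
    (E : EuclideanSpace ℝ (Fin n) → ℝ)
    (hE : ∀ v, (∃ y, E v = σ * p y + (1 / 2) * ‖y - v‖ ^ 2) ∧
      ∀ y, E v ≤ σ * p y + (1 / 2) * ‖y - v‖ ^ 2)
    (φ : EuclideanSpace ℝ (Fin m) → ℝ)
    (hφ : ∀ u, φ u = -hstar u -
        (1 / (2 * σ)) * ‖xt + σ • c - σ • (ContinuousLinearMap.adjoint A) u‖ ^ 2 +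
        (1 / σ) * E (xt + σ • c - σ • (ContinuousLinearMap.adjoint A) u)) :
    ConvexOn ℝ Set.univ
      (fun u : EuclideanSpace ℝ (Fin m) => -φ u - (α / 2) * ‖u‖ ^ 2) ∧
    ∃! u : EuclideanSpace ℝ (Fin m), ∀ v, φ v ≤ φ u :=
  stmt14_general n m A c xt σ hσ p hstar α hα hstrong E hE φ hφ
end

section
/- Let A ∈ ℝ^{m×n}, b ∈ {−1, 1}ᵐ, λ > 0, let G = {g₁,…,g_l} be a partition of {1,…,n}, and let w ∈ ℝⁿ have strictly positive entries. Define f(x) = Σ_{i=1}^{m} log(1 + exp(−bᵢ (Ax)ᵢ)) + λ Σ_{i=1}^{l} ‖w_{gᵢ} ∘ x_{gᵢ}‖₁². Then the set Ω of global minimizers of f over ℝⁿ is nonempty and compact. -/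
/-!
The logistic loss is nonnegative and the weighted exclusive lasso dominates
`∑ⱼ (wⱼ xⱼ)² ≥ (minⱼ wⱼ)² ‖x‖²` (a square of a sum of nonnegative terms is at least
the sum of their squares), so `f x ≥ λ (minⱼ wⱼ)² ‖x‖²` and the continuous function `f`
is coercive. A coercive continuous function attains its minimum, and its set of minimizers is a
closed subset of a compact sublevel set.
-/

open Filter Topology Finset

theorem Continuous.nonempty_and_isCompact_setOf_forall_le {X α : Type*} [TopologicalSpace X]
    [Nonempty X] [LinearOrder α] [TopologicalSpace α] [ClosedIicTopology α] [NoMaxOrder α]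
    {f : X → α} (hf : Continuous f) (hlim : Tendsto f (cocompact X) atTop) :
    {x | ∀ z, f x ≤ f z}.Nonempty ∧ IsCompact {x | ∀ z, f x ≤ f z} := by
  obtain ⟨x₀, hx₀⟩ := hf.exists_forall_le hlim
  obtain ⟨K, hK, hKc⟩ := mem_cocompact.1 (hlim.eventually (eventually_gt_atTop (f x₀)))
  refine ⟨⟨x₀, hx₀⟩, hK.of_isClosed_subset ?_ fun x hx => ?_⟩
  · rw [Set.ofPred_forall]
    exact isClosed_iInter fun z => isClosed_Iic.preimage hf
  · by_contra hxK
    exact (hKc hxK).not_ge (hx x₀)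

theorem tendsto_cocompact_atTop_of_mul_norm_sq_le {E : Type*} [NormedAddCommGroup E]
    [ProperSpace E] {f : E → ℝ} {c : ℝ} (hc : 0 < c) (h : ∀ x, c * ‖x‖ ^ 2 ≤ f x) :
    Tendsto f (cocompact E) atTop :=
  tendsto_atTop_mono h <|
    ((tendsto_pow_atTop two_ne_zero).const_mul_atTop hc).comp tendsto_norm_cocompact_atTop

theorem Real.exists_pos_forall_le_of_forall_pos {ι : Type*} [Finite ι] {w : ι → ℝ}
    (hw : ∀ j, 0 < w j) : ∃ ε > 0, ∀ j, ε ≤ w j := by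
  cases isEmpty_or_nonempty ι
  · exact ⟨1, one_pos, isEmptyElim⟩
  · obtain ⟨j₀, hj₀⟩ := Finite.exists_min w
    exact ⟨w j₀, hw j₀, hj₀⟩

theorem Finset.sum_sq_le_sum_sq_sum_fiberwise {ι κ R : Type*} [Fintype ι] [Fintype κ]
    [DecidableEq κ] [CommSemiring R] [PartialOrder R] [IsOrderedRing R] (g : ι → κ)
    {a : ι → R} (ha : ∀ j, 0 ≤ a j) :
    ∑ j, a j ^ 2 ≤ ∑ k, (∑ j ∈ univ.filter (fun j => g j = k), a j) ^ 2 := by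
  rw [← sum_fiberwise univ g]
  exact sum_le_sum fun k _ => sum_sq_le_sq_sum_of_nonneg fun j _ => ha j

noncomputable def logisticLoss {m ι : Type*} [Fintype m] [Fintype ι] (A : Matrix m ι ℝ)
    (b : m → ℝ) (x : ι → ℝ) : ℝ :=
  ∑ i, Real.log (1 + Real.exp (-(b i * A.mulVec x i)))

/-- The regularizer `Δ^{G,w}`, with the groups of the partition `G` given as the fibres of `g`. -/
def exclusiveLasso {ι κ : Type*} [Fintype ι] [Fintype κ] [DecidableEq κ] (g : ι → κ)
    (w x : ι → ℝ) : ℝ :=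
  ∑ k, (∑ j ∈ univ.filter (fun j => g j = k), w j * |x j|) ^ 2

section

variable {m ι κ : Type*} [Fintype m] [Fintype ι] [Fintype κ] [DecidableEq κ]

theorem logisticLoss_nonneg (A : Matrix m ι ℝ) (b : m → ℝ) (x : ι → ℝ) :
    0 ≤ logisticLoss A b x :=
  sum_nonneg fun _ _ => Real.log_nonneg <| le_add_of_nonneg_right (Real.exp_pos _).le

theorem continuous_logisticLoss (A : Matrix m ι ℝ) (b : m → ℝ) :
    Continuous (logisticLoss A b) := by
  unfold logisticLoss
  fun_prop (disch := intro _; positivity)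

theorem continuous_exclusiveLasso (g : ι → κ) (w : ι → ℝ) :
    Continuous (exclusiveLasso g w) := by
  unfold exclusiveLasso
  fun_prop

theorem sq_mul_sum_sq_le_exclusiveLasso (g : ι → κ) {w : ι → ℝ} {ε : ℝ} (hε : 0 ≤ ε)
    (hw : ∀ j, ε ≤ w j) (x : ι → ℝ) : ε ^ 2 * ∑ j, x j ^ 2 ≤ exclusiveLasso g w x :=
  calc ε ^ 2 * ∑ j, x j ^ 2 = ∑ j, (ε * |x j|) ^ 2 := by simp only [mul_sum, mul_pow, sq_abs]
    _ ≤ ∑ j, (w j * |x j|) ^ 2 := by gcongr with j; exact hw j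
    _ ≤ exclusiveLasso g w x :=
      sum_sq_le_sum_sq_sum_fiberwise g fun j => mul_nonneg (hε.trans (hw j)) (abs_nonneg _)

end

theorem stmt15_general (m n l : ℕ) (A : Matrix (Fin m) (Fin n) ℝ) (b : Fin m → ℝ)
    (lam : ℝ) (hlam : 0 < lam)
    (g : Fin n → Fin l)
    (w : Fin n → ℝ) (hw : ∀ j, 0 < w j)
    (f : EuclideanSpace ℝ (Fin n) → ℝ)
    (hf : ∀ x, f x = (∑ i, Real.log (1 + Real.exp (-(b i * A.mulVec x i)))) +
      lam * ∑ k : Fin l, (∑ j ∈ Finset.univ.filter (fun j => g j = k), w j * |x j|) ^ 2) :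
    {x : EuclideanSpace ℝ (Fin n) | ∀ z, f x ≤ f z}.Nonempty ∧
      IsCompact {x : EuclideanSpace ℝ (Fin n) | ∀ z, f x ≤ f z} := by
  have hf' : f = fun x : EuclideanSpace ℝ (Fin n) =>
      logisticLoss A b x + lam * exclusiveLasso g w x := funext hf
  obtain ⟨ε, hε, hεw⟩ := Real.exists_pos_forall_le_of_forall_pos hw
  have hcoercive : ∀ x, lam * ε ^ 2 * ‖x‖ ^ 2 ≤ f x := fun x => by
    rw [hf', EuclideanSpace.real_norm_sq_eq, mul_assoc]
    have hlasso := sq_mul_sum_sq_le_exclusiveLasso g hε.le hεw x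
    exact (mul_le_mul_of_nonneg_left hlasso hlam.le).trans
      (le_add_of_nonneg_left (logisticLoss_nonneg A b x))
  have hcont : Continuous f := by
    rw [hf']
    exact ((continuous_logisticLoss A b).add
      (continuous_const.mul (continuous_exclusiveLasso g w))).comp (PiLp.continuous_ofLp 2 _)
  exact hcont.nonempty_and_isCompact_setOf_forall_le
    (tendsto_cocompact_atTop_of_mul_norm_sq_le (by positivity) hcoercive)

theorem stmt15 (m n l : ℕ) (A : Matrix (Fin m) (Fin n) ℝ) (b : Fin m → ℝ)
    (hb : ∀ i, b i = 1 ∨ b i = -1) (lam : ℝ) (hlam : 0 < lam)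
    (g : Fin n → Fin l) (hg : Function.Surjective g)
    (w : Fin n → ℝ) (hw : ∀ j, 0 < w j)
    (f : EuclideanSpace ℝ (Fin n) → ℝ)
    (hf : ∀ x, f x = (∑ i, Real.log (1 + Real.exp (-(b i * A.mulVec x i)))) +
      lam * ∑ k : Fin l, (∑ j ∈ Finset.univ.filter (fun j => g j = k), w j * |x j|) ^ 2) :
    {x : EuclideanSpace ℝ (Fin n) | ∀ z, f x ≤ f z}.Nonempty ∧
      IsCompact {x : EuclideanSpace ℝ (Fin n) | ∀ z, f x ≤ f z} :=
  stmt15_general m n l A b lam hlam g w hw f hf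
end
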